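/- The compression capacity of the model (10;C1,C2;f) equals C2. That is, the supremum, over all positive integers k and all admissible k-shot codes (φ1, φ2), of the rate k / max(⌈log|Im φ1| / C1⌉, ⌈log|Im φ2| / C2⌉) equals C2. -/

import Mathlib

/-!
Statement 3: The compression capacity of the model (10;C1,C2;f), where encoder 1 observes only x,
encoder 2 observes both sources, and the target function is the binary arithmetic sum
f(x,y) = x + y, equals C2. Encoders are maps with finite image; WLOG they take values in ℕ.
-/

/-- The componentwise integer sum of two binary vectors. -/
def vsum {k : ℕ} (x y : Fin k → Fin 2) : Fin k → ℕ := fun i => (x i : ℕ) + (y i : ℕ)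

/-- The cardinality of the image of an encoding map defined on `A^k`. -/
def imCard1 {k : ℕ} (φ : (Fin k → Fin 2) → ℕ) : ℕ := (Finset.univ.image φ).card

/-- The cardinality of the image of an encoding map defined on `A^k × A^k`. -/
def imCard2 {k : ℕ} (φ : (Fin k → Fin 2) × (Fin k → Fin 2) → ℕ) : ℕ :=
  (Finset.univ.image φ).card

/-- Admissibility for the model (10;C1,C2;f): there is a decoder that recovers `x + y`
with zero error from the encoder outputs `φ1 x` and `φ2 (x, y)`. -/
def Admissible10 {k : ℕ} (φ1 : (Fin k → Fin 2) → ℕ)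
    (φ2 : (Fin k → Fin 2) × (Fin k → Fin 2) → ℕ) : Prop :=
  ∃ ψ : ℕ → ℕ → (Fin k → ℕ), ∀ x y : Fin k → Fin 2, ψ (φ1 x) (φ2 (x, y)) = vsum x y

/-- The rate of a k-shot code: `k / max(⌈log|Im φ1| / C1⌉, ⌈log|Im φ2| / C2⌉)`,
logarithms in base 2. -/
noncomputable def rate10 (C1 C2 : ℝ) {k : ℕ} (φ1 : (Fin k → Fin 2) → ℕ)
    (φ2 : (Fin k → Fin 2) × (Fin k → Fin 2) → ℕ) : ℝ :=
  (k : ℝ) /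
    ((max ⌈Real.logb 2 (imCard1 φ1) / C1⌉ ⌈Real.logb 2 (imCard2 φ2) / C2⌉ : ℤ) : ℝ)

/-!
Whatever encoder 2 sends must determine `y` once `x` is fixed, since `x + y` does; so it needs
at least `2 ^ k` messages, `k / C2` channel uses, and no code has rate above `C2`. Conversely,
letting each encoder send its own source verbatim costs `⌈k / C1⌉ ≤ ⌈k / C2⌉` uses on the
first channel and `⌈k / C2⌉` on the second, a rate `k / ⌈k / C2⌉` that tends to `C2`.
-/

open Filter Topology

lemma vsum_right_injective {k : ℕ} (x : Fin k → Fin 2) : Function.Injective (vsum x) :=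
  fun y y' h => funext fun i => Fin.val_injective (by simpa [vsum] using congrFun h i)

lemma Admissible10.injective_right {k : ℕ} {φ1 : (Fin k → Fin 2) → ℕ}
    {φ2 : (Fin k → Fin 2) × (Fin k → Fin 2) → ℕ} (h : Admissible10 φ1 φ2)
    (x : Fin k → Fin 2) : Function.Injective fun y => φ2 (x, y) := by
  obtain ⟨ψ, hψ⟩ := h
  intro y y' hy
  apply vsum_right_injective x
  rw [← hψ, ← hψ]
  exact congrArg (ψ (φ1 x)) hy

lemma Admissible10.two_pow_le_imCard2 {k : ℕ} {φ1 : (Fin k → Fin 2) → ℕ}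
    {φ2 : (Fin k → Fin 2) × (Fin k → Fin 2) → ℕ} (h : Admissible10 φ1 φ2) :
    2 ^ k ≤ imCard2 φ2 := by
  have := Finset.card_le_card_of_injOn (fun y => φ2 (0, y)) (s := Finset.univ)
    (t := Finset.univ.image φ2) (fun y _ => by simp) (h.injective_right 0).injOn
  simpa [imCard2] using this

lemma Admissible10.rate10_le {k : ℕ} {φ1 : (Fin k → Fin 2) → ℕ}
    {φ2 : (Fin k → Fin 2) × (Fin k → Fin 2) → ℕ} (h : Admissible10 φ1 φ2) (hk : 0 < k)
    (C1 : ℝ) {C2 : ℝ} (hC2 : 0 < C2) : rate10 C1 C2 φ1 φ2 ≤ C2 := by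
  have hlog : (k : ℝ) ≤ Real.logb 2 (imCard2 φ2) := by
    have hcard : ((2 ^ k : ℕ) : ℝ) ≤ imCard2 φ2 := by exact_mod_cast h.two_pow_le_imCard2
    rw [Real.le_logb_iff_rpow_le one_lt_two (lt_of_lt_of_le (by positivity) hcard)]
    simpa using hcard
  have hmax : (k : ℝ) / C2 ≤
      ((max ⌈Real.logb 2 (imCard1 φ1) / C1⌉ ⌈Real.logb 2 (imCard2 φ2) / C2⌉ : ℤ) : ℝ) :=
    calc (k : ℝ) / C2 ≤ Real.logb 2 (imCard2 φ2) / C2 := by gcongr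
      _ ≤ ⌈Real.logb 2 (imCard2 φ2) / C2⌉ := Int.le_ceil _
      _ ≤ _ := by exact_mod_cast le_max_right _ _
  calc rate10 C1 C2 φ1 φ2 ≤ k / (k / C2) := by unfold rate10; gcongr
    _ = C2 := by field_simp

noncomputable def binEnc (k : ℕ) : (Fin k → Fin 2) → ℕ := fun x => Fintype.equivFin _ x

lemma binEnc_injective (k : ℕ) : Function.Injective (binEnc k) :=
  Fin.val_injective.comp (Fintype.equivFin _).injective

lemma imCard1_binEnc (k : ℕ) : imCard1 (binEnc k) = 2 ^ k := by
  simp [imCard1, Finset.card_image_of_injective _ (binEnc_injective k)]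

lemma imCard2_binEnc_snd (k : ℕ) : imCard2 (binEnc k ∘ Prod.snd) = 2 ^ k := by
  rw [imCard2, ← Finset.image_image, Finset.image_univ_of_surjective Prod.snd_surjective]
  exact imCard1_binEnc k

lemma admissible10_binEnc (k : ℕ) : Admissible10 (binEnc k) (binEnc k ∘ Prod.snd) :=
  ⟨fun a b => vsum (Function.invFun (binEnc k) a) (Function.invFun (binEnc k) b),
    fun x y => by simp [Function.leftInverse_invFun (binEnc_injective k) _]⟩

lemma rate10_binEnc {C1 C2 : ℝ} (hC : C2 ≤ C1) (hC2 : 0 < C2) (k : ℕ) :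
    rate10 C1 C2 (binEnc k) (binEnc k ∘ Prod.snd) = k / ⌈k / C2⌉ := by
  have hlog : Real.logb 2 ((2 ^ k : ℕ) : ℝ) = k := by simp [Real.logb_pow]
  rw [rate10, imCard1_binEnc, imCard2_binEnc_snd, hlog, max_eq_right]
  exact Int.ceil_le_ceil (div_le_div_of_nonneg_left k.cast_nonneg hC2 hC)

lemma tendsto_div_ceil_div {C : ℝ} (hC : 0 < C) :
    Tendsto (fun k : ℕ => (k : ℝ) / ⌈k / C⌉) atTop (𝓝 C) := by
  have h := (tendsto_nat_ceil_mul_div_atTop (inv_nonneg.2 hC.le)).comp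
    tendsto_natCast_atTop_atTop |>.inv₀ (inv_ne_zero hC.ne')
  rw [inv_inv] at h
  refine h.congr fun k => ?_
  simp [div_eq_inv_mul, natCast_ceil_eq_intCast_ceil (by positivity : (0 : ℝ) ≤ C⁻¹ * k)]

theorem capacity_10 (C1 C2 : ℝ) (hC : C2 ≤ C1) (hC2 : 0 < C2) :
    sSup {r : ℝ | ∃ (k : ℕ), 0 < k ∧ ∃ (φ1 : (Fin k → Fin 2) → ℕ)
      (φ2 : (Fin k → Fin 2) × (Fin k → Fin 2) → ℕ),
      Admissible10 φ1 φ2 ∧ r = rate10 C1 C2 φ1 φ2} = C2 := by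
  refine csSup_eq_of_forall_le_of_forall_lt_exists_gt
    ⟨_, 1, one_pos, _, _, admissible10_binEnc 1, rfl⟩ ?_ fun w hw => ?_
  · rintro _ ⟨k, hk, φ1, φ2, h, rfl⟩
    exact h.rate10_le hk C1 hC2
  · obtain ⟨k, hwk, hk⟩ :=
      (((tendsto_div_ceil_div hC2).eventually (lt_mem_nhds hw)).and (eventually_gt_atTop 0)).exists
    exact ⟨_, ⟨k, hk, _, _, admissible10_binEnc k, rfl⟩,
      hwk.trans_eq (rate10_binEnc hC hC2 k).symm⟩
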